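/- arXiv:2505.16302 — 3 statements merged into one kernel-verified Lean document; each statement's English description precedes it below -/
import Mathlib

section
/- Under the block structure Σ̂ = G̃ D G̃ᵀ with G̃ = [[G₁₁,0],[G₂₁,G̃₂₂]] and D = diag(D₁, D₂), Stein's loss decomposes as L(Σ̂,Σ) = tr(L⁻¹ G D₁ Gᵀ L⁻ᵀ) − log det D₁ − log det(L₁₁⁻¹G₁₁G₁₁ᵀL₁₁⁻ᵀ) + tr(L₂₂⁻¹G̃₂₂D₂G̃₂₂ᵀL₂₂⁻ᵀ) − log det(L₂₂⁻¹G̃₂₂D₂G̃₂₂ᵀL₂₂⁻ᵀ), where G = [G₁₁; G₂₁] is the p×n matrix of the first n columns. -/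
/-!
Writing `Σ = L Lᵀ`, Stein's loss only sees the whitened matrix `L⁻¹ Σ̂ L⁻ᵀ`. Splitting
`G̃ D G̃ᵀ` into the contributions of the two column blocks, `G D₁ Gᵀ + E D₂ Eᵀ` with
`E = [0; G̃₂₂]`, the trace splits accordingly, and because `L` is block lower triangular,
`L⁻¹ E = [0; L₂₂⁻¹ G̃₂₂]`, so the second trace only involves the lower right blocks. The
determinant is multiplicative, and `det G̃ = det G₁₁ det G̃₂₂`, `det L = det L₁₁ det L₂₂`
regroup it into the three factors whose logarithms appear in the decomposition.
-/

open Matrix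

/-- Stein's loss of a matrix `A` relative to `S`. -/
noncomputable def steinLoss {p : Type*} [Fintype p] [DecidableEq p]
    (A S : Matrix p p ℝ) : ℝ :=
  (A * S⁻¹).trace - Real.log (A * S⁻¹).det

namespace Matrix

variable {R : Type*} {l m n : Type*} [Fintype m] [Fintype n]

theorem trace_fromBlocks [AddCommMonoid R] (A : Matrix m m R) (B : Matrix m n R)
    (C : Matrix n m R) (D : Matrix n n R) :
    (fromBlocks A B C D).trace = A.trace + D.trace := by
  simp [trace, Fintype.sum_sum_type]

theorem trace_fromRows_mul_mul_transpose [CommSemiring R] [Fintype l] (A : Matrix m l R)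
    (B : Matrix n l R) (Q : Matrix l l R) :
    (fromRows A B * Q * (fromRows A B)ᵀ).trace = (A * Q * Aᵀ).trace + (B * Q * Bᵀ).trace := by
  rw [transpose_fromRows, fromRows_mul, fromRows_mul_fromCols, trace_fromBlocks]

theorem fromBlocks_zero₁₂_mul_mul_transpose [CommSemiring R] (A : Matrix m m R)
    (C : Matrix n m R) (D : Matrix n n R) (P : Matrix m m R) (Q : Matrix n n R) :
    fromBlocks A 0 C D * fromBlocks P 0 0 Q * (fromBlocks A 0 C D)ᵀ
      = fromRows A C * P * (fromRows A C)ᵀ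
        + fromRows (0 : Matrix m n R) D * Q * (fromRows (0 : Matrix m n R) D)ᵀ := by
  ext (i | i) (j | j) <;> simp [fromBlocks, mul_apply, Fintype.sum_sum_type]

variable [DecidableEq m] [DecidableEq n]

theorem inv_fromBlocks_zero₁₂_mul_fromRows_zero [CommRing R] (A : Matrix m m R)
    (C : Matrix n m R) (D : Matrix n n R) (hAD : IsUnit A ↔ IsUnit D) (E : Matrix n l R) :
    (fromBlocks A 0 C D)⁻¹ * fromRows (0 : Matrix m l R) E = fromRows 0 (D⁻¹ * E) := by
  simp [inv_fromBlocks_zero₁₂_of_isUnit_iff A C D hAD, fromBlocks_mul_fromRows]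

end Matrix

theorem steinLoss_mul_transpose {p : Type*} [Fintype p] [DecidableEq p]
    (A L : Matrix p p ℝ) :
    steinLoss A (L * Lᵀ)
      = (L⁻¹ * A * L⁻¹ᵀ).trace - Real.log (L⁻¹ * A * L⁻¹ᵀ).det := by
  have hinv : (L * Lᵀ)⁻¹ = L⁻¹ᵀ * L⁻¹ := by rw [Matrix.mul_inv_rev, transpose_nonsing_inv]
  rw [steinLoss, hinv, ← Matrix.mul_assoc, trace_mul_cycle, Matrix.mul_assoc]
  congr 2
  simp only [det_mul]
  ring

section BlockCholesky

variable {K : Type*} [Field K] {m n : Type*} [Fintype m] [Fintype n] [DecidableEq m]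
  [DecidableEq n] (L11 G11 P : Matrix m m K) (L21 G21 : Matrix n m K) (L22 G22 Q : Matrix n n K)

theorem trace_whiten_fromBlocks_zero₁₂ (hL : IsUnit L11 ↔ IsUnit L22) :
    ((fromBlocks L11 0 L21 L22)⁻¹
        * (fromBlocks G11 0 G21 G22 * fromBlocks P 0 0 Q * (fromBlocks G11 0 G21 G22)ᵀ)
        * (fromBlocks L11 0 L21 L22)⁻¹ᵀ).trace
      = ((fromBlocks L11 0 L21 L22)⁻¹ * fromRows G11 G21 * P * (fromRows G11 G21)ᵀ
          * (fromBlocks L11 0 L21 L22)⁻¹ᵀ).trace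
        + (L22⁻¹ * G22 * Q * G22ᵀ * L22⁻¹ᵀ).trace := by
  set M := (fromBlocks L11 0 L21 L22)⁻¹
  have hlower : M * (fromRows 0 G22 * Q * (fromRows 0 G22)ᵀ) * Mᵀ
      = fromRows (0 : Matrix m n K) (L22⁻¹ * G22) * Q * (fromRows 0 (L22⁻¹ * G22))ᵀ := by
    rw [← inv_fromBlocks_zero₁₂_mul_fromRows_zero L11 L21 L22 hL, transpose_mul]
    simp only [M, Matrix.mul_assoc]
  rw [fromBlocks_zero₁₂_mul_mul_transpose, Matrix.mul_add, Matrix.add_mul, trace_add, hlower,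
    trace_fromRows_mul_mul_transpose]
  simp [Matrix.mul_assoc, transpose_mul]

theorem det_whiten_fromBlocks_zero₁₂ :
    ((fromBlocks L11 0 L21 L22)⁻¹
        * (fromBlocks G11 0 G21 G22 * fromBlocks P 0 0 Q * (fromBlocks G11 0 G21 G22)ᵀ)
        * (fromBlocks L11 0 L21 L22)⁻¹ᵀ).det
      = P.det * (L11⁻¹ * G11 * G11ᵀ * L11⁻¹ᵀ).det * (L22⁻¹ * G22 * Q * G22ᵀ * L22⁻¹ᵀ).det := by
  simp only [det_mul, det_transpose, det_nonsing_inv, Ring.inverse_eq_inv', det_fromBlocks_zero₁₂]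
  ring

end BlockCholesky

theorem stmt8_general {n m : ℕ}
    (L11 G11 : Matrix (Fin n) (Fin n) ℝ) (L21 G21 : Matrix (Fin m) (Fin n) ℝ)
    (L22 G22t : Matrix (Fin m) (Fin m) ℝ)
    (d1 : Fin n → ℝ) (d2 : Fin m → ℝ)
    (hL11 : IsUnit L11.det) (hL22 : IsUnit L22.det)
    (hG11 : IsUnit G11.det) (hG22 : IsUnit G22t.det)
    (hd1 : ∀ j, 0 < d1 j) (hd2 : ∀ j, 0 < d2 j) :
    steinLoss
        (Matrix.fromBlocks G11 0 G21 G22t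
          * Matrix.fromBlocks (Matrix.diagonal d1) 0 0 (Matrix.diagonal d2)
          * (Matrix.fromBlocks G11 0 G21 G22t)ᵀ)
        (Matrix.fromBlocks L11 0 L21 L22 * (Matrix.fromBlocks L11 0 L21 L22)ᵀ)
      = ((Matrix.fromBlocks L11 0 L21 L22)⁻¹ * Matrix.fromRows G11 G21
            * Matrix.diagonal d1 * (Matrix.fromRows G11 G21)ᵀ
            * ((Matrix.fromBlocks L11 0 L21 L22)⁻¹)ᵀ).trace
        - Real.log (Matrix.diagonal d1).det
        - Real.log (L11⁻¹ * G11 * G11ᵀ * (L11⁻¹)ᵀ).det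
        + (L22⁻¹ * G22t * Matrix.diagonal d2 * G22tᵀ * (L22⁻¹)ᵀ).trace
        - Real.log (L22⁻¹ * G22t * Matrix.diagonal d2 * G22tᵀ * (L22⁻¹)ᵀ).det := by
  have hL : IsUnit L11 ↔ IsUnit L22 := by
    simp only [isUnit_iff_isUnit_det, hL11, hL22]
  have hD1 : (diagonal d1).det ≠ 0 := by
    simpa [det_diagonal, Finset.prod_ne_zero_iff] using fun j => (hd1 j).ne'
  have hW1 : (L11⁻¹ * G11 * G11ᵀ * L11⁻¹ᵀ).det ≠ 0 := by
    simp [hL11.ne_zero, hG11.ne_zero]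
  have hW2 : (L22⁻¹ * G22t * diagonal d2 * G22tᵀ * L22⁻¹ᵀ).det ≠ 0 := by
    simp [hL22.ne_zero, hG22.ne_zero, Finset.prod_ne_zero_iff, fun j => (hd2 j).ne']
  rw [steinLoss_mul_transpose, trace_whiten_fromBlocks_zero₁₂ (hL := hL),
    det_whiten_fromBlocks_zero₁₂, Real.log_mul (mul_ne_zero hD1 hW1) hW2, Real.log_mul hD1 hW1]
  ring

/-- Decomposition of Stein's loss under the block Cholesky structure. -/
theorem stmt8 {n m : ℕ}
    (L11 G11 : Matrix (Fin n) (Fin n) ℝ) (L21 G21 : Matrix (Fin m) (Fin n) ℝ)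
    (L22 G22t : Matrix (Fin m) (Fin m) ℝ)
    (d1 : Fin n → ℝ) (d2 : Fin m → ℝ)
    (hL11low : ∀ i j : Fin n, i < j → L11 i j = 0) (hL11 : IsUnit L11.det)
    (hL22low : ∀ i j : Fin m, i < j → L22 i j = 0) (hL22 : IsUnit L22.det)
    (hG11low : ∀ i j : Fin n, i < j → G11 i j = 0) (hG11 : IsUnit G11.det)
    (hG22 : IsUnit G22t.det)
    (hd1 : ∀ j, 0 < d1 j) (hd2 : ∀ j, 0 < d2 j) :
    steinLoss
        (Matrix.fromBlocks G11 0 G21 G22t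
          * Matrix.fromBlocks (Matrix.diagonal d1) 0 0 (Matrix.diagonal d2)
          * (Matrix.fromBlocks G11 0 G21 G22t)ᵀ)
        (Matrix.fromBlocks L11 0 L21 L22 * (Matrix.fromBlocks L11 0 L21 L22)ᵀ)
      = ((Matrix.fromBlocks L11 0 L21 L22)⁻¹ * Matrix.fromRows G11 G21
            * Matrix.diagonal d1 * (Matrix.fromRows G11 G21)ᵀ
            * ((Matrix.fromBlocks L11 0 L21 L22)⁻¹)ᵀ).trace
        - Real.log (Matrix.diagonal d1).det
        - Real.log (L11⁻¹ * G11 * G11ᵀ * (L11⁻¹)ᵀ).det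
        + (L22⁻¹ * G22t * Matrix.diagonal d2 * G22tᵀ * (L22⁻¹)ᵀ).trace
        - Real.log (L22⁻¹ * G22t * Matrix.diagonal d2 * G22tᵀ * (L22⁻¹)ᵀ).det :=
  stmt8_general L11 G11 L21 G21 L22 G22t d1 d2 hL11 hL22 hG11 hG22 hd1 hd2
end

section
/- If G̃₂₂ D₂ G̃₂₂ᵀ = Σ₂.₁ and d_j = (g_jᵀ Σ⁻¹ g_j)⁻¹ for j = 1,…,n, then Stein's loss of Σ̂ = G̃ D G̃ᵀ equals p + Σ_{j=1}^n log(g_jᵀΣ⁻¹g_j) − log det(L₁₁⁻¹G₁₁G₁₁ᵀL₁₁⁻ᵀ), and this is the minimum value of the loss over all positive diagonal D and invertible G̃₂₂. -/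
/-!
Write `Σ = L Lᵀ`, `ℓ` for Stein's loss and `aⱼ = gⱼᵀ Σ⁻¹ gⱼ`, which is positive because `G` has
full column rank. Since `G̃` and `L` are block lower triangular and the lower-right block of `Σ⁻¹`
is `Σ₂.₁⁻¹`, the trace and the determinant of `Σ̂ Σ⁻¹` split along the blocks, and
`ℓ(Σ̂, Σ) = Σⱼ (dⱼ aⱼ - log dⱼ) - log det(L₁₁⁻¹ G₁₁ G₁₁ᵀ L₁₁⁻ᵀ) + ℓ(G̃₂₂ D₂ G̃₂₂ᵀ, Σ₂.₁)`.
By `log t ≤ t - 1`, each `x aⱼ - log x` is at least `1 + log aⱼ`, with equality at `x = aⱼ⁻¹`, and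
`ℓ(A, S)` is at least the size of the matrices when `A` and `S` are positive definite (apply it to
the eigenvalues of `L⁻¹ A L⁻ᵀ` where `S = L Lᵀ`), with equality at `A = S`.
-/

open Matrix

namespace Matrix

variable {p q R : Type*} [CommRing R]

lemma inv_mul_transpose_self [Fintype p] [DecidableEq p] (L : Matrix p p R) :
    (L * Lᵀ)⁻¹ = L⁻¹ᵀ * L⁻¹ := by
  rw [mul_inv_rev, transpose_nonsing_inv]

lemma transpose_mul_inv_mul_transpose_self_mul [Fintype p] [DecidableEq p] (L : Matrix p p R)
    (X : Matrix p q R) :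
    Xᵀ * (L * Lᵀ)⁻¹ * X = (L⁻¹ * X)ᵀ * (L⁻¹ * X) := by
  simp only [inv_mul_transpose_self, transpose_mul, Matrix.mul_assoc]

lemma trace_mul_diagonal_mul_transpose_mul [Fintype p] [Fintype q] [DecidableEq q]
    (G : Matrix p q R) (d : q → R) (S : Matrix p p R) :
    (G * diagonal d * Gᵀ * S).trace = ∑ j, d j * (Gᵀ * S * G) j j := by
  rw [Matrix.mul_assoc, Matrix.mul_assoc, trace_mul_comm, Matrix.mul_assoc]
  simp [trace, diagonal_mul, Matrix.mul_assoc]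

lemma transpose_fromCols_mul_mul_fromCols [Fintype p] {r : Type*} (X : Matrix p q R)
    (Y : Matrix p r R) (S : Matrix p p R) :
    (fromCols X Y)ᵀ * S * fromCols X Y
      = fromBlocks (Xᵀ * S * X) (Xᵀ * S * Y) (Yᵀ * S * X) (Yᵀ * S * Y) := by
  rw [transpose_fromCols, fromRows_mul, fromRows_mul_fromCols]

lemma mulVec_fromRows_injective [Fintype p] [DecidableEq p] {G₁ : Matrix p p R}
    (hG₁ : IsUnit G₁.det) (G₂ : Matrix q p R) :
    Function.Injective (fromRows G₁ G₂).mulVec := by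
  intro v w h
  rw [fromRows_mulVec, fromRows_mulVec] at h
  exact mulVec_injective_of_isUnit ((isUnit_iff_isUnit_det _).2 hG₁)
    (funext fun i => by simpa using congrFun h (Sum.inl i))

lemma posDef_mul_diagonal_mul_transpose [Fintype p] [DecidableEq p] {W : Matrix p p ℝ}
    (hW : IsUnit W.det) {d : p → ℝ} (hd : ∀ i, 0 < d i) : (W * diagonal d * Wᵀ).PosDef := by
  simpa [star_eq_conjTranspose] using
    (IsUnit.posDef_star_right_conjugate_iff (x := diagonal d)
      ((isUnit_iff_isUnit_det W).2 hW)).2 (.diagonal hd)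

lemma posDef_mul_transpose_self [Fintype p] [DecidableEq p] {L : Matrix p p ℝ}
    (hL : IsUnit L.det) : (L * Lᵀ).PosDef := by
  simpa using PosDef.mul_conjTranspose_self L
    (vecMul_injective_of_isUnit ((isUnit_iff_isUnit_det L).2 hL))

lemma PosDef.diag_transpose_mul_inv_mul_pos [Fintype p] [Fintype q] [DecidableEq p]
    {S : Matrix p p ℝ} (hS : S.PosDef) {G : Matrix p q ℝ} (hG : Function.Injective G.mulVec)
    (j : q) : 0 < (Gᵀ * S⁻¹ * G) j j := by
  simpa using (hS.inv.conjTranspose_mul_mul_same hG).diag_pos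

lemma PosDef.card_le_trace_sub_log_det [Fintype p] [DecidableEq p] {B : Matrix p p ℝ}
    (hB : B.PosDef) : (Fintype.card p : ℝ) ≤ B.trace - Real.log B.det := by
  have hpos := hB.eigenvalues_pos
  rw [hB.1.trace_eq_sum_eigenvalues, hB.1.det_eq_prod_eigenvalues]
  simp only [RCLike.ofReal_real_eq_id, id]
  rw [Real.log_prod fun i _ => (hpos i).ne', ← Finset.sum_sub_distrib]
  calc (Fintype.card p : ℝ) = ∑ _i : p, (1 : ℝ) := by simp
    _ ≤ _ := Finset.sum_le_sum fun i _ => by linarith [Real.log_le_sub_one_of_pos (hpos i)]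

end Matrix

lemma Real.one_add_log_le_mul_sub_log {a x : ℝ} (ha : 0 < a) (hx : 0 < x) :
    1 + Real.log a ≤ x * a - Real.log x := by
  have := Real.log_le_sub_one_of_pos (mul_pos hx ha)
  rw [Real.log_mul hx.ne' ha.ne'] at this
  linarith

section SteinLoss

variable {p : Type*} [Fintype p] [DecidableEq p]

lemma steinLoss_self {S : Matrix p p ℝ} (hS : IsUnit S.det) :
    steinLoss S S = Fintype.card p := by
  simp [steinLoss, mul_nonsing_inv _ hS]

lemma steinLoss_mul_transpose_self (A L : Matrix p p ℝ) :
    steinLoss A (L * Lᵀ) = steinLoss (L⁻¹ * A * L⁻¹ᵀ) 1 := by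
  rw [steinLoss, steinLoss, inv_one, Matrix.mul_one, inv_mul_transpose_self, ← Matrix.mul_assoc,
    trace_mul_comm]
  simp only [det_mul, Matrix.mul_assoc]
  ring_nf

lemma card_le_steinLoss {A L : Matrix p p ℝ} (hA : A.PosDef) (hL : IsUnit L.det) :
    (Fintype.card p : ℝ) ≤ steinLoss A (L * Lᵀ) := by
  have hB : (L⁻¹ * A * L⁻¹ᵀ).PosDef := by
    simpa [star_eq_conjTranspose] using
      (IsUnit.posDef_star_right_conjugate_iff (x := A)
        (isUnit_nonsing_inv_iff.2 ((isUnit_iff_isUnit_det L).2 hL))).2 hA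
  rw [steinLoss_mul_transpose_self]
  simpa [steinLoss] using hB.card_le_trace_sub_log_det

end SteinLoss

section BlockLowerTriangular

variable {ι κ : Type*} [Fintype ι] [Fintype κ] [DecidableEq ι] [DecidableEq κ]
  {L11 : Matrix ι ι ℝ} {L21 : Matrix κ ι ℝ} {L22 : Matrix κ κ ℝ}

lemma inv_fromBlocks_zero₁₂_mul_fromRows_zero (hL11 : IsUnit L11.det) (hL22 : IsUnit L22.det)
    (Y : Matrix κ κ ℝ) :
    (fromBlocks L11 0 L21 L22)⁻¹ * fromRows (0 : Matrix ι κ ℝ) Y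
      = fromRows (0 : Matrix ι κ ℝ) (L22⁻¹ * Y) := by
  rw [inv_fromBlocks_zero₁₂_of_isUnit_iff _ _ _ (iff_of_true
    ((isUnit_iff_isUnit_det _).2 hL11) ((isUnit_iff_isUnit_det _).2 hL22)),
    fromBlocks_mul_fromRows]
  simp

/-- The lower-right block of `Σ⁻¹` is the inverse of the Schur complement `Σ₂.₁ = L₂₂ L₂₂ᵀ`. -/
lemma transpose_fromRows_zero_mul_inv_mul (hL11 : IsUnit L11.det) (hL22 : IsUnit L22.det)
    (Y : Matrix κ κ ℝ) :
    (fromRows (0 : Matrix ι κ ℝ) Y)ᵀ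
        * (fromBlocks L11 0 L21 L22 * (fromBlocks L11 0 L21 L22)ᵀ)⁻¹
        * fromRows (0 : Matrix ι κ ℝ) Y
      = Yᵀ * (L22 * L22ᵀ)⁻¹ * Y := by
  rw [transpose_mul_inv_mul_transpose_self_mul,
    inv_fromBlocks_zero₁₂_mul_fromRows_zero hL11 hL22, transpose_fromRows, fromCols_mul_fromRows,
    transpose_mul_inv_mul_transpose_self_mul]
  simp

lemma trace_fromBlocks_mul_diagonal_mul_transpose_mul_inv (hL11 : IsUnit L11.det)
    (hL22 : IsUnit L22.det) (G11 : Matrix ι ι ℝ) (G21 : Matrix κ ι ℝ) (G22 : Matrix κ κ ℝ)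
    (d1 : ι → ℝ) (d2 : κ → ℝ) :
    (fromBlocks G11 0 G21 G22 * fromBlocks (diagonal d1) 0 0 (diagonal d2)
        * (fromBlocks G11 0 G21 G22)ᵀ
        * (fromBlocks L11 0 L21 L22 * (fromBlocks L11 0 L21 L22)ᵀ)⁻¹).trace
      = ∑ j, d1 j * ((fromRows G11 G21)ᵀ
          * (fromBlocks L11 0 L21 L22 * (fromBlocks L11 0 L21 L22)ᵀ)⁻¹ * fromRows G11 G21) j j
        + (G22 * diagonal d2 * G22ᵀ * (L22 * L22ᵀ)⁻¹).trace := by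
  rw [fromBlocks_diagonal, trace_mul_diagonal_mul_transpose_mul,
    trace_mul_diagonal_mul_transpose_mul, Fintype.sum_sum_type,
    ← fromCols_fromRows_eq_fromBlocks, transpose_fromCols_mul_mul_fromCols,
    transpose_fromRows_zero_mul_inv_mul hL11 hL22]
  simp

lemma det_fromBlocks_mul_diagonal_mul_transpose_mul_inv
    (G11 : Matrix ι ι ℝ) (G21 : Matrix κ ι ℝ) (G22 : Matrix κ κ ℝ) (d1 : ι → ℝ) (d2 : κ → ℝ) :
    (fromBlocks G11 0 G21 G22 * fromBlocks (diagonal d1) 0 0 (diagonal d2)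
        * (fromBlocks G11 0 G21 G22)ᵀ
        * (fromBlocks L11 0 L21 L22 * (fromBlocks L11 0 L21 L22)ᵀ)⁻¹).det
      = (∏ j, d1 j) * (L11⁻¹ * G11 * G11ᵀ * L11⁻¹ᵀ).det
        * (G22 * diagonal d2 * G22ᵀ * (L22 * L22ᵀ)⁻¹).det := by
  simp only [det_mul, det_transpose, det_nonsing_inv, det_fromBlocks_zero₁₂, det_diagonal,
    Ring.inverse_eq_inv']
  ring

lemma steinLoss_fromBlocks_mul_diagonal_mul_transpose (hL11 : IsUnit L11.det)
    (hL22 : IsUnit L22.det) {G11 : Matrix ι ι ℝ} (G21 : Matrix κ ι ℝ) {G22 : Matrix κ κ ℝ}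
    {d1 : ι → ℝ} {d2 : κ → ℝ} (hG11 : IsUnit G11.det) (hd1 : ∀ j, d1 j ≠ 0)
    (h22 : IsUnit (G22 * diagonal d2 * G22ᵀ).det) :
    steinLoss (fromBlocks G11 0 G21 G22 * fromBlocks (diagonal d1) 0 0 (diagonal d2)
        * (fromBlocks G11 0 G21 G22)ᵀ) (fromBlocks L11 0 L21 L22 * (fromBlocks L11 0 L21 L22)ᵀ)
      = ∑ j, (d1 j * ((fromRows G11 G21)ᵀ
            * (fromBlocks L11 0 L21 L22 * (fromBlocks L11 0 L21 L22)ᵀ)⁻¹ * fromRows G11 G21) j j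
          - Real.log (d1 j))
        - Real.log (L11⁻¹ * G11 * G11ᵀ * L11⁻¹ᵀ).det
        + steinLoss (G22 * diagonal d2 * G22ᵀ) (L22 * L22ᵀ) := by
  have hprod : ∏ j, d1 j ≠ 0 := Finset.prod_ne_zero_iff.2 fun j _ => hd1 j
  have h11 : (L11⁻¹ * G11 * G11ᵀ * L11⁻¹ᵀ).det ≠ 0 := by
    simp [det_mul, hL11.ne_zero, hG11.ne_zero]
  have h22' : (G22 * diagonal d2 * G22ᵀ * (L22 * L22ᵀ)⁻¹).det ≠ 0 := by
    rw [det_mul]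
    exact mul_ne_zero h22.ne_zero (by simp [det_mul, hL22.ne_zero])
  rw [steinLoss, steinLoss, trace_fromBlocks_mul_diagonal_mul_transpose_mul_inv hL11 hL22,
    det_fromBlocks_mul_diagonal_mul_transpose_mul_inv, Real.log_mul (mul_ne_zero hprod h11) h22',
    Real.log_mul hprod h11, Real.log_prod fun j _ => hd1 j, Finset.sum_sub_distrib]
  ring

end BlockLowerTriangular

theorem stmt10_general {n m : ℕ}
    (L11 G11 : Matrix (Fin n) (Fin n) ℝ) (L21 G21 : Matrix (Fin m) (Fin n) ℝ)
    (L22 G22t : Matrix (Fin m) (Fin m) ℝ)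
    (d1 : Fin n → ℝ) (d2 : Fin m → ℝ)
    (hL11 : IsUnit L11.det)
    (hL22 : IsUnit L22.det)
    (hG11 : IsUnit G11.det)
    (hd1 : ∀ j, d1 j = (((Matrix.fromRows G11 G21)ᵀ
        * (Matrix.fromBlocks L11 0 L21 L22 * (Matrix.fromBlocks L11 0 L21 L22)ᵀ)⁻¹
        * Matrix.fromRows G11 G21) j j)⁻¹)
    (hSchur : G22t * Matrix.diagonal d2 * G22tᵀ = L22 * L22ᵀ) :
    steinLoss
        (Matrix.fromBlocks G11 0 G21 G22t
          * Matrix.fromBlocks (Matrix.diagonal d1) 0 0 (Matrix.diagonal d2)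
          * (Matrix.fromBlocks G11 0 G21 G22t)ᵀ)
        (Matrix.fromBlocks L11 0 L21 L22 * (Matrix.fromBlocks L11 0 L21 L22)ᵀ)
      = ((n : ℝ) + (m : ℝ))
        + (∑ j, Real.log (((Matrix.fromRows G11 G21)ᵀ
            * (Matrix.fromBlocks L11 0 L21 L22 * (Matrix.fromBlocks L11 0 L21 L22)ᵀ)⁻¹
            * Matrix.fromRows G11 G21) j j))
        - Real.log (L11⁻¹ * G11 * G11ᵀ * (L11⁻¹)ᵀ).det ∧
    ∀ (d1' : Fin n → ℝ) (d2' : Fin m → ℝ) (G22t' : Matrix (Fin m) (Fin m) ℝ),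
      (∀ j, 0 < d1' j) → (∀ j, 0 < d2' j) → IsUnit G22t'.det →
      steinLoss
          (Matrix.fromBlocks G11 0 G21 G22t
            * Matrix.fromBlocks (Matrix.diagonal d1) 0 0 (Matrix.diagonal d2)
            * (Matrix.fromBlocks G11 0 G21 G22t)ᵀ)
          (Matrix.fromBlocks L11 0 L21 L22 * (Matrix.fromBlocks L11 0 L21 L22)ᵀ)
        ≤ steinLoss
            (Matrix.fromBlocks G11 0 G21 G22t'
              * Matrix.fromBlocks (Matrix.diagonal d1') 0 0 (Matrix.diagonal d2')
              * (Matrix.fromBlocks G11 0 G21 G22t')ᵀ)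
            (Matrix.fromBlocks L11 0 L21 L22 * (Matrix.fromBlocks L11 0 L21 L22)ᵀ) := by
  set L := fromBlocks L11 0 L21 L22
  have hdecomp := fun d1 d2 G22 => steinLoss_fromBlocks_mul_diagonal_mul_transpose hL11 hL22 G21
    hG11 (L21 := L21) (d1 := d1) (d2 := d2) (G22 := G22)
  set M := (fromRows G11 G21)ᵀ * (L * Lᵀ)⁻¹ * fromRows G11 G21
  have hL : IsUnit L.det := by rw [det_fromBlocks_zero₁₂]; exact hL11.mul hL22
  have ha : ∀ j, 0 < M j j := (posDef_mul_transpose_self hL).diag_transpose_mul_inv_mul_pos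
    (mulVec_fromRows_injective hG11 G21)
  have hsum : ∀ j, d1 j * M j j - Real.log (d1 j) = 1 + Real.log (M j j) := fun j => by
    rw [hd1, inv_mul_cancel₀ (ha j).ne', Real.log_inv, sub_neg_eq_add]
  have hS₂₂ : IsUnit (L22 * L22ᵀ).det := by simp [det_mul, hL22.ne_zero]
  have hopt := hdecomp d1 d2 G22t (fun j => by rw [hd1]; exact inv_ne_zero (ha j).ne')
    (hSchur ▸ hS₂₂)
  rw [hSchur, steinLoss_self hS₂₂, Finset.sum_congr rfl fun j _ => hsum j,
    Finset.sum_add_distrib] at hopt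
  simp only [Finset.sum_const, Finset.card_univ, Fintype.card_fin, nsmul_eq_mul, mul_one] at hopt
  refine ⟨by rw [hopt]; ring, fun d1' d2' G22t' hd1' hd2' hG22t' => ?_⟩
  have hpd := posDef_mul_diagonal_mul_transpose hG22t' hd2'
  rw [hopt, hdecomp d1' d2' G22t' (fun j => (hd1' j).ne') hpd.det_pos.ne'.isUnit]
  have h₁ := Finset.sum_le_sum fun j (_ : j ∈ Finset.univ) =>
    Real.one_add_log_le_mul_sub_log (ha j) (hd1' j)
  have h₂ := card_le_steinLoss hpd hL22
  rw [Finset.sum_add_distrib] at h₁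
  simp only [Finset.sum_const, Finset.card_univ, Fintype.card_fin, nsmul_eq_mul, mul_one] at h₁ h₂
  linarith

/-- With the optimal choices `d_j = (g_jᵀ Σ⁻¹ g_j)⁻¹` and
`G̃₂₂ D₂ G̃₂₂ᵀ = Σ₂.₁ = L₂₂ L₂₂ᵀ`, Stein's loss equals
`p + Σ_j log(g_jᵀ Σ⁻¹ g_j) - log det(L₁₁⁻¹ G₁₁ G₁₁ᵀ L₁₁⁻ᵀ)`, and this value is
the minimum of the loss over all positive diagonal `D` and invertible `G̃₂₂`. -/
theorem stmt10 {n m : ℕ}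
    (L11 G11 : Matrix (Fin n) (Fin n) ℝ) (L21 G21 : Matrix (Fin m) (Fin n) ℝ)
    (L22 G22t : Matrix (Fin m) (Fin m) ℝ)
    (d1 : Fin n → ℝ) (d2 : Fin m → ℝ)
    (hL11low : ∀ i j : Fin n, i < j → L11 i j = 0) (hL11 : IsUnit L11.det)
    (hL22low : ∀ i j : Fin m, i < j → L22 i j = 0) (hL22 : IsUnit L22.det)
    (hG11low : ∀ i j : Fin n, i < j → G11 i j = 0) (hG11 : IsUnit G11.det)
    (hG22 : IsUnit G22t.det)
    (hd1 : ∀ j, d1 j = (((Matrix.fromRows G11 G21)ᵀ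
        * (Matrix.fromBlocks L11 0 L21 L22 * (Matrix.fromBlocks L11 0 L21 L22)ᵀ)⁻¹
        * Matrix.fromRows G11 G21) j j)⁻¹)
    (hd2pos : ∀ j, 0 < d2 j)
    (hSchur : G22t * Matrix.diagonal d2 * G22tᵀ = L22 * L22ᵀ) :
    steinLoss
        (Matrix.fromBlocks G11 0 G21 G22t
          * Matrix.fromBlocks (Matrix.diagonal d1) 0 0 (Matrix.diagonal d2)
          * (Matrix.fromBlocks G11 0 G21 G22t)ᵀ)
        (Matrix.fromBlocks L11 0 L21 L22 * (Matrix.fromBlocks L11 0 L21 L22)ᵀ)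
      = ((n : ℝ) + (m : ℝ))
        + (∑ j, Real.log (((Matrix.fromRows G11 G21)ᵀ
            * (Matrix.fromBlocks L11 0 L21 L22 * (Matrix.fromBlocks L11 0 L21 L22)ᵀ)⁻¹
            * Matrix.fromRows G11 G21) j j))
        - Real.log (L11⁻¹ * G11 * G11ᵀ * (L11⁻¹)ᵀ).det ∧
    ∀ (d1' : Fin n → ℝ) (d2' : Fin m → ℝ) (G22t' : Matrix (Fin m) (Fin m) ℝ),
      (∀ j, 0 < d1' j) → (∀ j, 0 < d2' j) → IsUnit G22t'.det →
      steinLoss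
          (Matrix.fromBlocks G11 0 G21 G22t
            * Matrix.fromBlocks (Matrix.diagonal d1) 0 0 (Matrix.diagonal d2)
            * (Matrix.fromBlocks G11 0 G21 G22t)ᵀ)
          (Matrix.fromBlocks L11 0 L21 L22 * (Matrix.fromBlocks L11 0 L21 L22)ᵀ)
        ≤ steinLoss
            (Matrix.fromBlocks G11 0 G21 G22t'
              * Matrix.fromBlocks (Matrix.diagonal d1') 0 0 (Matrix.diagonal d2')
              * (Matrix.fromBlocks G11 0 G21 G22t')ᵀ)
            (Matrix.fromBlocks L11 0 L21 L22 * (Matrix.fromBlocks L11 0 L21 L22)ᵀ) :=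
  stmt10_general L11 G11 L21 G21 L22 G22t d1 d2 hL11 hL22 hG11 hd1 hSchur
end

section
/- For the Gaussian likelihood L(X;Σ) ∝ det(L₁₁)^{−n} det(L₂₂)^{−n} exp(−½‖L₁₁⁻¹G₁₁‖_F²) exp(−½‖L₂₂⁻¹(G₂₁ − L₂₁L₁₁⁻¹G₁₁)‖_F²), the supremum over L₁₁ (lower triangular, positive diagonal) and L₂₁ is attained at L₁₁ = n^{−1/2}G₁₁ and L₂₁ = n^{−1/2}G₂₁, and the resulting profile likelihood is proportional to det(L₂₂)^{−n}, which is unbounded as det(L₂₂) → 0; hence L₂₂ is not identifiable. -/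
/-!
Put `A = L₁₁⁻¹ G₁₁`. It is lower triangular, so `det L₁₁⁻ⁿ = (∏ Aᵢᵢ)ⁿ / det G₁₁ⁿ`, while
`‖A‖²_F ≥ ∑ Aᵢᵢ²`. Hence the `L₁₁`-dependent part of the likelihood is at most
`∏ᵢ |Aᵢᵢ|ⁿ exp(-Aᵢᵢ²/2) / det G₁₁ⁿ`, and each factor is at most `√nⁿ e^{-n/2}`, its value at
`|Aᵢᵢ| = √n`; equality holds at `L₁₁ = n^{-1/2} G₁₁`. The remaining factor
`exp(-½‖L₂₂⁻¹(G₂₁ - L₂₁L₁₁⁻¹G₁₁)‖²_F)` is at most `1`, with equality at `L₂₁ = n^{-1/2} G₂₁`.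
What is left is `c · det L₂₂⁻ⁿ`, and `det L₂₂` can be made arbitrarily small.
-/

open Matrix

/-- Squared Frobenius norm. -/
noncomputable def sqFrob {a b : Type*} [Fintype a] [Fintype b]
    (M : Matrix a b ℝ) : ℝ :=
  ∑ i, ∑ j, (M i j) ^ 2

/-- The Gaussian likelihood in Cholesky coordinates. -/
noncomputable def lik {n m : ℕ} (nn : ℕ)
    (G11 : Matrix (Fin n) (Fin n) ℝ) (G21 : Matrix (Fin m) (Fin n) ℝ)
    (L11 : Matrix (Fin n) (Fin n) ℝ) (L21 : Matrix (Fin m) (Fin n) ℝ)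
    (L22 : Matrix (Fin m) (Fin m) ℝ) : ℝ :=
  L11.det ^ (-(nn : ℤ)) * L22.det ^ (-(nn : ℤ))
    * Real.exp (-(1 / 2) * sqFrob (L11⁻¹ * G11))
    * Real.exp (-(1 / 2) * sqFrob (L22⁻¹ * (G21 - L21 * L11⁻¹ * G11)))

open Real

theorem abs_pow_mul_exp_neg_half_sq_le (n : ℕ) (a : ℝ) :
    |a| ^ n * exp (-(1 / 2) * a ^ 2) ≤ √n ^ n * exp (-(1 / 2) * n) := by
  rcases Nat.eq_zero_or_pos n with rfl | hn
  · simpa using mul_nonpos_of_nonpos_of_nonneg (by norm_num : -(1 / 2 : ℝ) ≤ 0) (sq_nonneg a)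
  have hs : 0 < √n := sqrt_pos.2 (Nat.cast_pos.2 hn)
  set y := |a| / √n with hy_def
  have hy : y ≤ exp ((y ^ 2 - 1) / 2) :=
    calc y ≤ exp (y - 1) := by linarith [add_one_le_exp (y - 1)]
      _ ≤ exp ((y ^ 2 - 1) / 2) := exp_le_exp.2 (by nlinarith [sq_nonneg (y - 1)])
  have hny : n * y ^ 2 = a ^ 2 := by
    rw [hy_def, div_pow, sq_sqrt (Nat.cast_nonneg n), sq_abs]
    field_simp
  calc |a| ^ n * exp (-(1 / 2) * a ^ 2) = √n ^ n * y ^ n * exp (-(1 / 2) * a ^ 2) := by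
        rw [← mul_pow, mul_div_cancel₀ _ hs.ne']
    _ ≤ √n ^ n * exp ((y ^ 2 - 1) / 2) ^ n * exp (-(1 / 2) * a ^ 2) := by
        gcongr
    _ = √n ^ n * exp (-(1 / 2) * n) := by
        rw [← exp_nat_mul, mul_assoc, ← exp_add]
        congr 2
        linear_combination (1 / 2) * hny

theorem sqFrob_nonneg {a b : Type*} [Fintype a] [Fintype b] (M : Matrix a b ℝ) : 0 ≤ sqFrob M :=
  Finset.sum_nonneg fun _ _ => Finset.sum_nonneg fun _ _ => sq_nonneg _

@[simp]
theorem sqFrob_zero {a b : Type*} [Fintype a] [Fintype b] : sqFrob (0 : Matrix a b ℝ) = 0 := by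
  simp [sqFrob]

section Diagonal

variable {ι : Type*} [Fintype ι]

theorem sum_diag_sq_le_sqFrob (A : Matrix ι ι ℝ) : ∑ i, A i i ^ 2 ≤ sqFrob A :=
  Finset.sum_le_sum fun i _ =>
    Finset.single_le_sum (f := fun j => A i j ^ 2) (fun _ _ => sq_nonneg _) (Finset.mem_univ i)

theorem prod_abs_diag_pow_mul_exp_sqFrob_le (A : Matrix ι ι ℝ) (n : ℕ) :
    (∏ i, |A i i|) ^ n * exp (-(1 / 2) * sqFrob A)
      ≤ (√n ^ n * exp (-(1 / 2) * n)) ^ Fintype.card ι := by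
  calc (∏ i, |A i i|) ^ n * exp (-(1 / 2) * sqFrob A)
        ≤ (∏ i, |A i i|) ^ n * exp (-(1 / 2) * ∑ i, A i i ^ 2) := by
        gcongr _ * exp ?_
        linarith [sum_diag_sq_le_sqFrob A]
    _ = ∏ i, (|A i i| ^ n * exp (-(1 / 2) * A i i ^ 2)) := by
        rw [Finset.prod_mul_distrib, Finset.prod_pow, Finset.mul_sum, exp_sum]
    _ ≤ ∏ _i : ι, (√n ^ n * exp (-(1 / 2) * n)) :=
        Finset.prod_le_prod (fun _ _ => by positivity) fun i _ =>
          abs_pow_mul_exp_neg_half_sq_le n (A i i)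
    _ = (√n ^ n * exp (-(1 / 2) * n)) ^ Fintype.card ι := by
        rw [Finset.prod_const, Finset.card_univ]

theorem sqFrob_smul_one [DecidableEq ι] (c : ℝ) :
    sqFrob (c • (1 : Matrix ι ι ℝ)) = Fintype.card ι * c ^ 2 := by
  simp [sqFrob, Matrix.one_apply, ite_pow, Finset.sum_ite_eq]

end Diagonal

section LowerTriangular

variable {ι : Type*} [Fintype ι] [LinearOrder ι]

theorem det_pos_of_isLowerTriangular {L : Matrix ι ι ℝ} (hL : L.IsLowerTriangular)
    (hdiag : ∀ i, 0 < L i i) : 0 < L.det := by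
  rw [det_of_isLowerTriangular L hL]
  exact Finset.prod_pos fun i _ => hdiag i

theorem det_zpow_mul_exp_sqFrob_inv_mul_le {L G : Matrix ι ι ℝ}
    (hL : L.IsLowerTriangular) (hLdet : L.det ≠ 0)
    (hG : G.IsLowerTriangular) (hGdet : 0 < G.det) (n : ℕ) :
    L.det ^ (-(n : ℤ)) * exp (-(1 / 2) * sqFrob (L⁻¹ * G))
      ≤ (√n ^ n * exp (-(1 / 2) * n)) ^ Fintype.card ι / G.det ^ n := by
  have : Invertible L := L.invertibleOfIsUnitDet (isUnit_iff_ne_zero.2 hLdet)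
  set A := L⁻¹ * G
  have hA : A.IsLowerTriangular := (blockTriangular_inv_of_blockTriangular hL).mul hG
  have hdetA : L.det⁻¹ = A.det / G.det := by
    rw [det_mul, det_nonsing_inv, Ring.inverse_eq_inv', mul_div_cancel_right₀ _ hGdet.ne']
  have hLpow : L.det ^ (-(n : ℤ)) ≤ (∏ i, |A i i|) ^ n / G.det ^ n := by
    rw [_root_.zpow_neg, zpow_natCast, ← inv_pow, hdetA, div_pow, ← Finset.abs_prod,
      ← det_of_isLowerTriangular A hA, ← abs_pow]
    gcongr
    exact le_abs_self _
  calc L.det ^ (-(n : ℤ)) * exp (-(1 / 2) * sqFrob A)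
      ≤ (∏ i, |A i i|) ^ n / G.det ^ n * exp (-(1 / 2) * sqFrob A) := by gcongr
    _ = (∏ i, |A i i|) ^ n * exp (-(1 / 2) * sqFrob A) / G.det ^ n := div_mul_eq_mul_div _ _ _
    _ ≤ _ := by gcongr; exact prod_abs_diag_pow_mul_exp_sqFrob_le A n

theorem exists_isLowerTriangular_lt_det_zpow [Nonempty ι] {n : ℕ} (hn : n ≠ 0) (M : ℝ) :
    ∃ L : Matrix ι ι ℝ, L.IsLowerTriangular ∧ (∀ i, 0 < L i i) ∧ M < L.det ^ (-(n : ℤ)) := by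
  set x := |M| + 1
  have hx : 1 ≤ x := by linarith [abs_nonneg M]
  refine ⟨diagonal fun _ => x⁻¹, blockTriangular_diagonal _, fun i => by simp; positivity, ?_⟩
  rw [det_diagonal, Finset.prod_const, Finset.card_univ, _root_.zpow_neg, zpow_natCast, ← pow_mul,
    inv_pow, inv_inv]
  calc M < x := by linarith [le_abs_self M]
    _ ≤ x ^ (Fintype.card ι * n) := le_self_pow₀ hx (Nat.mul_ne_zero Fintype.card_ne_zero hn)

end LowerTriangular

section Likelihood

variable {n m : ℕ}

theorem lik_le_of_det_nonneg (nn : ℕ) (G11 : Matrix (Fin n) (Fin n) ℝ)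
    (G21 : Matrix (Fin m) (Fin n) ℝ) {L11 : Matrix (Fin n) (Fin n) ℝ}
    (L21 : Matrix (Fin m) (Fin n) ℝ) {L22 : Matrix (Fin m) (Fin m) ℝ}
    (h11 : 0 ≤ L11.det) (h22 : 0 ≤ L22.det) :
    lik nn G11 G21 L11 L21 L22
      ≤ L11.det ^ (-(nn : ℤ)) * exp (-(1 / 2) * sqFrob (L11⁻¹ * G11))
        * L22.det ^ (-(nn : ℤ)) := by
  set P :=
    L11.det ^ (-(nn : ℤ)) * exp (-(1 / 2) * sqFrob (L11⁻¹ * G11)) * L22.det ^ (-(nn : ℤ))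
  have hP : 0 ≤ P := by positivity
  calc lik nn G11 G21 L11 L21 L22
      = P * exp (-(1 / 2) * sqFrob (L22⁻¹ * (G21 - L21 * L11⁻¹ * G11))) := by
        unfold lik; ring
    _ ≤ P * 1 := by
        gcongr
        exact exp_le_one_iff.2
          (by linarith [sqFrob_nonneg (L22⁻¹ * (G21 - L21 * L11⁻¹ * G11))])
    _ = P := mul_one P

theorem lik_inv_sqrt_smul (hn : 0 < n) {G11 : Matrix (Fin n) (Fin n) ℝ} (hG11 : G11.det ≠ 0)
    (G21 : Matrix (Fin m) (Fin n) ℝ) (L22 : Matrix (Fin m) (Fin m) ℝ) :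
    lik n G11 G21 ((√n)⁻¹ • G11) ((√n)⁻¹ • G21) L22
      = (√n ^ n * exp (-(1 / 2) * n)) ^ n / G11.det ^ n * L22.det ^ (-(n : ℤ)) := by
  set s := √n
  have hs : s ≠ 0 := (sqrt_pos.2 (Nat.cast_pos.2 hn)).ne'
  have hGu : IsUnit G11.det := isUnit_iff_ne_zero.2 hG11
  have hBinv : (s⁻¹ • G11)⁻¹ = s • G11⁻¹ :=
    inv_eq_left_inv (by simp [hs, smul_smul, nonsing_inv_mul _ hGu])
  have hBG : (s⁻¹ • G11)⁻¹ * G11 = s • 1 := by rw [hBinv, smul_mul, nonsing_inv_mul _ hGu]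
  have hresidual : G21 - s⁻¹ • G21 * (s⁻¹ • G11)⁻¹ * G11 = 0 := by
    rw [Matrix.mul_assoc, hBG, Matrix.mul_smul, Matrix.mul_one, smul_smul, mul_inv_cancel₀ hs,
      one_smul, sub_self]
  have hsq : sqFrob (s • (1 : Matrix (Fin n) (Fin n) ℝ)) = n * n := by
    rw [sqFrob_smul_one, Fintype.card_fin, sq_sqrt (Nat.cast_nonneg n)]
  unfold lik
  rw [hBG, hresidual, hsq, Matrix.mul_zero, sqFrob_zero]
  have hexp : exp (-(1 / 2) * n) ^ n = exp (-(1 / 2) * (n * n)) := by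
    rw [← exp_nat_mul]; ring_nf
  rw [det_smul, Fintype.card_fin, inv_pow, mul_zero, exp_zero, mul_one, _root_.zpow_neg,
    zpow_natCast, mul_pow (s ^ n), hexp]
  simp only [mul_pow, inv_pow, mul_inv, inv_inv]
  ring

end Likelihood

/-- The likelihood is maximized over `(L₁₁, L₂₁)` at
`L₁₁ = n^{-1/2} G₁₁`, `L₂₁ = n^{-1/2} G₂₁`; the profile likelihood is
proportional to `det(L₂₂)^{-n}` and is unbounded, so `L₂₂` is not identifiable. -/
theorem stmt16 {n m : ℕ} (hn : 0 < n) (hm : 0 < m)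
    (G11 : Matrix (Fin n) (Fin n) ℝ)
    (hG11low : ∀ i j : Fin n, i < j → G11 i j = 0)
    (hG11diag : ∀ i, 0 < G11 i i)
    (G21 : Matrix (Fin m) (Fin n) ℝ) :
    (∀ L22 : Matrix (Fin m) (Fin m) ℝ,
      (∀ i j : Fin m, i < j → L22 i j = 0) → (∀ i, 0 < L22 i i) →
      ∀ (L11 : Matrix (Fin n) (Fin n) ℝ) (L21 : Matrix (Fin m) (Fin n) ℝ),
        (∀ i j : Fin n, i < j → L11 i j = 0) → (∀ i, 0 < L11 i i) →
        lik n G11 G21 L11 L21 L22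
          ≤ lik n G11 G21 ((Real.sqrt n)⁻¹ • G11) ((Real.sqrt n)⁻¹ • G21) L22) ∧
    (∃ c : ℝ, 0 < c ∧ ∀ L22 : Matrix (Fin m) (Fin m) ℝ,
      (∀ i j : Fin m, i < j → L22 i j = 0) → (∀ i, 0 < L22 i i) →
      lik n G11 G21 ((Real.sqrt n)⁻¹ • G11) ((Real.sqrt n)⁻¹ • G21) L22
        = c * L22.det ^ (-(n : ℤ))) ∧
    (∀ M : ℝ, ∃ L22 : Matrix (Fin m) (Fin m) ℝ,
      (∀ i j : Fin m, i < j → L22 i j = 0) ∧ (∀ i, 0 < L22 i i) ∧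
      M < lik n G11 G21 ((Real.sqrt n)⁻¹ • G11) ((Real.sqrt n)⁻¹ • G21) L22) := by
  have hG11 : G11.IsLowerTriangular := fun i j h => hG11low i j h
  have hG11det := det_pos_of_isLowerTriangular hG11 hG11diag
  set c := (√n ^ n * exp (-(1 / 2) * n)) ^ n / G11.det ^ n
  have hopt L22 := lik_inv_sqrt_smul hn hG11det.ne' G21 L22
  refine ⟨fun L22 h22low h22diag L11 L21 h11low h11diag => ?_,
    ⟨c, by positivity, fun L22 _ _ => hopt L22⟩, fun M => ?_⟩
  · have h11 : L11.IsLowerTriangular := fun i j h => h11low i j h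
    have h11det := det_pos_of_isLowerTriangular h11 h11diag
    have h22det := det_pos_of_isLowerTriangular (fun i j h => h22low i j h) h22diag
    have hprofile := det_zpow_mul_exp_sqFrob_inv_mul_le h11 h11det.ne' hG11 hG11det n
    rw [Fintype.card_fin] at hprofile
    calc lik n G11 G21 L11 L21 L22
        ≤ L11.det ^ (-(n : ℤ)) * exp (-(1 / 2) * sqFrob (L11⁻¹ * G11))
            * L22.det ^ (-(n : ℤ)) :=
          lik_le_of_det_nonneg n G11 G21 L21 h11det.le h22det.le
      _ ≤ c * L22.det ^ (-(n : ℤ)) := by gcongr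
      _ = _ := (hopt L22).symm
  · have : Nonempty (Fin m) := Fin.pos_iff_nonempty.1 hm
    obtain ⟨L22, h22, h22diag, hlt⟩ :=
      exists_isLowerTriangular_lt_det_zpow (ι := Fin m) hn.ne' (M / c)
    refine ⟨L22, fun i j h => h22 h, h22diag, ?_⟩
    rw [hopt]
    exact (div_lt_iff₀' (by positivity)).1 hlt
end
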